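/- The spectral radius of χ(T₃,₃,ᵣ)(λ) = λ^{r+4} + λ^{r+3} − 2λ^{r+1} − 3(λ⁴ + ⋯ + λʳ) − 2λ³ + λ + 1 converges, as r → ∞, to the golden ratio (√5 + 1)/2. -/

import Mathlib

open Polynomial Filter

noncomputable section

/-- The characteristic polynomial of the Coxeter transformation of the diagram `T₃,₃,ᵣ`:
`χ(T₃,₃,ᵣ)(λ) = λ^{r+4} + λ^{r+3} − 2λ^{r+1} − 3(λ⁴ + ⋯ + λʳ) − 2λ³ + λ + 1`. -/
def chiT33 (r : ℕ) : Polynomial ℝ :=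
  X ^ (r + 4) + X ^ (r + 3) - 2 * X ^ (r + 1)
    - 3 * (∑ i ∈ Finset.Icc 4 r, X ^ i) - 2 * X ^ 3 + X + 1

/-!
Summing the geometric block gives
`(λ - 1) χ(T₃,₃,ᵣ)(λ) = (λ² + λ + 1) (λ^{r+1} (λ² - λ - 1) + λ² + λ - 1)`.
For `λ ≥ φ` both summands of the second factor are nonnegative and the last is positive, so every
real root lies below `φ`. For fixed `1 < y < φ` the coefficient `y² - y - 1` is negative, so the
second factor tends to `-∞` as `r → ∞`; hence `χ(y) < 0 < χ(φ)` for large `r`, and the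
intermediate value theorem traps the largest root in `[y, φ]`.
-/

open Real goldenRatio

lemma sq_sub_sub_one_eq_mul_goldenRatio (x : ℝ) : x ^ 2 - x - 1 = (x - φ) * (x - ψ) := by
  linear_combination x * goldenRatio_add_goldenConj - goldenRatio_mul_goldenConj

lemma sub_one_mul_eval_chiT33 {r : ℕ} (hr : 3 ≤ r) (x : ℝ) :
    (x - 1) * (chiT33 r).eval x
      = (x ^ 2 + x + 1) * (x ^ (r + 1) * (x ^ 2 - x - 1) + (x ^ 2 + x - 1)) := by
  have hgeom := geom_sum_Ico_mul x (show 4 ≤ r + 1 by omega)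
  rw [Finset.Ico_add_one_right_eq_Icc] at hgeom
  simp only [chiT33, eval_add, eval_sub, eval_mul, eval_pow, eval_X, eval_one, eval_ofNat,
    eval_finsetSum]
  linear_combination (-3 : ℝ) * hgeom

lemma eval_chiT33_pos_of_goldenRatio_le {r : ℕ} (hr : 3 ≤ r) {x : ℝ} (hx : φ ≤ x) :
    0 < (chiT33 r).eval x := by
  have hx1 : 1 < x := one_lt_goldenRatio.trans_le hx
  have hquad : 0 ≤ x ^ 2 - x - 1 := by
    rw [sq_sub_sub_one_eq_mul_goldenRatio]
    exact mul_nonneg (sub_nonneg.2 hx) (sub_pos.2 (goldenConj_neg.trans (by linarith))).le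
  have hprod : 0 < (x - 1) * (chiT33 r).eval x := by
    rw [sub_one_mul_eval_chiT33 hr]
    have : 0 ≤ x ^ (r + 1) * (x ^ 2 - x - 1) := by positivity
    exact mul_pos (by positivity) (by nlinarith)
  exact pos_of_mul_pos_right hprod (sub_nonneg.2 hx1.le)

lemma lt_goldenRatio_of_isRoot_chiT33 {r : ℕ} (hr : 3 ≤ r) {x : ℝ}
    (hx : (chiT33 r).IsRoot x) : x < φ :=
  not_le.1 fun h => (eval_chiT33_pos_of_goldenRatio_le hr h).ne' hx

lemma eventually_eval_chiT33_neg {y : ℝ} (hy1 : 1 < y) (hyφ : y < φ) :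
    ∀ᶠ r in atTop, (chiT33 r).eval y < 0 := by
  have hquad : y ^ 2 - y - 1 < 0 := by
    rw [sq_sub_sub_one_eq_mul_goldenRatio]
    exact mul_neg_of_neg_of_pos (sub_neg.2 hyφ) (sub_pos.2 (goldenConj_neg.trans (by linarith)))
  have hfactor : Tendsto (fun r : ℕ => y ^ (r + 1) * (y ^ 2 - y - 1) + (y ^ 2 + y - 1))
      atTop atBot :=
    tendsto_atBot_add_const_right _ _ <|
      ((tendsto_pow_atTop_atTop_of_one_lt hy1).comp (tendsto_add_atTop_nat 1)).atTop_mul_const_of_neg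
        hquad
  filter_upwards [hfactor.eventually_lt_atBot 0, eventually_ge_atTop 3] with r hneg hr
  have hprod : (y - 1) * (chiT33 r).eval y < 0 := by
    rw [sub_one_mul_eval_chiT33 hr]
    exact mul_neg_of_pos_of_neg (by positivity) hneg
  exact neg_of_mul_neg_right hprod (sub_nonneg.2 hy1.le)

lemma le_sSup_setOf_isRoot {p : ℝ[X]} {a b : ℝ} (hab : a ≤ b) (ha : p.eval a ≤ 0)
    (hb : 0 ≤ p.eval b) (hroots : ∀ x, p.IsRoot x → x ≤ b) :
    a ≤ sSup {x | p.IsRoot x} := by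
  obtain ⟨c, hc, hroot⟩ :=
    intermediate_value_Icc hab p.continuous_aeval.continuousOn ⟨ha, hb⟩
  exact hc.1.trans (le_csSup ⟨b, hroots⟩ hroot)

/-- The spectral radius (largest real root) of `χ(T₃,₃,ᵣ)` converges, as `r → ∞`, to the
golden ratio `(√5 + 1)/2`. -/
theorem spectralRadius_T33r_tendsto :
    Tendsto (fun r : ℕ => sSup {x : ℝ | (chiT33 r).IsRoot x}) atTop
      (nhds ((Real.sqrt 5 + 1) / 2)) := by
  rw [add_comm, ← goldenRatio, tendsto_order]
  refine ⟨fun a ha => ?_, fun b hb => ?_⟩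
  · obtain ⟨y, hay, hyφ⟩ := exists_between (max_lt ha one_lt_goldenRatio)
    filter_upwards [eventually_eval_chiT33_neg ((le_max_right _ _).trans_lt hay) hyφ,
      eventually_ge_atTop 3] with r hneg hr
    refine ((le_max_left _ _).trans_lt hay).trans_le (le_sSup_setOf_isRoot hyφ.le hneg.le
      (eval_chiT33_pos_of_goldenRatio_le hr le_rfl).le fun x hx => ?_)
    exact (lt_goldenRatio_of_isRoot_chiT33 hr hx).le
  · filter_upwards [eventually_ge_atTop 3] with r hr
    refine (Real.sSup_le (fun x hx => ?_) goldenRatio_pos.le).trans_lt hb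
    exact (lt_goldenRatio_of_isRoot_chiT33 hr hx).le

end
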